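/- arXiv:2207.06056 — 4 statements merged into one kernel-verified Lean document; each statement's English description precedes it below -/
import Mathlib

section
/- Let M ≥ 2 be an integer, 1 ≤ l ≤ M-1, a > 0 and Θ = (θ_1,…,θ_{M-1}) ∈ ℝ^{M-1}. Then det ℬ_l(a,Θ) = sinh^{M-2}(πA) · ( (e^{πA} - (-1)^M e^{-πA})/2 + Σ_{k=0}^{l-1} (-1)^{l+k} e^{A(θ_k - θ_l + π)} + (-1)^M Σ_{k=l}^{M-1} (-1)^{l+k} e^{A(θ_k - θ_l - π)} ), where θ_0 := 0. -/
open Complex Real Finset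

noncomputable section

/-- `A(a) = -2ai/(a+i)`. -/
def Afun (a : ℝ) : ℂ := -2 * (a : ℂ) * Complex.I / ((a : ℂ) + Complex.I)

/-- The angles `θ_0 = 0`, `θ_j = Θ_j` for `1 ≤ j ≤ M-1`, read off a vector `Θ ∈ ℝ^{M-1}`. -/
def thN (M : ℕ) (Θ : Fin (M - 1) → ℝ) (j : ℕ) : ℝ :=
  if h : 1 ≤ j ∧ j ≤ M - 1 then Θ ⟨j - 1, by omega⟩ else 0

/-- `r = e^{-Aπ}`. -/
def rC (a : ℝ) : ℂ := Complex.exp (-(Afun a * (π : ℂ)))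

/-- `r_k = e^{-Aθ_{k-1}}`, for `1 ≤ k ≤ M`. -/
def rkC (M : ℕ) (a : ℝ) (Θ : Fin (M - 1) → ℝ) (k : ℕ) : ℂ :=
  Complex.exp (-(Afun a * ((thN M Θ (k - 1) : ℝ) : ℂ)))

/-- `c = (r + r⁻¹)/2`. -/
def cC (a : ℝ) : ℂ := (rC a + (rC a)⁻¹) / 2

/-- The matrix `ℬ(a,Θ)`, indexed by `l, m ∈ {1, …, M-1}`. -/
def Bmat (M : ℕ) (a : ℝ) (Θ : Fin (M - 1) → ℝ) : Matrix (Fin (M - 1)) (Fin (M - 1)) ℂ :=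
  Matrix.of fun l m : Fin (M - 1) =>
    if (l : ℕ) = (m : ℕ) then
      (cC a * rkC M a Θ ((l : ℕ) + 2) - rC a * rkC M a Θ 1) / rkC M a Θ ((l : ℕ) + 2)
    else if (l : ℕ) < (m : ℕ) then
      rC a * (rkC M a Θ ((l : ℕ) + 2) - rkC M a Θ 1) / rkC M a Θ ((m : ℕ) + 2)
    else
      ((rC a)⁻¹ * rkC M a Θ ((l : ℕ) + 2) - rC a * rkC M a Θ 1) / rkC M a Θ ((m : ℕ) + 2)

/-- The vector `b`, with entries `b_j = (r⁻¹ r_{j+1} - c r_1)/r_1` for `j ∈ {1, …, M-1}`. -/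
def bvec (M : ℕ) (a : ℝ) (Θ : Fin (M - 1) → ℝ) (j : Fin (M - 1)) : ℂ :=
  ((rC a)⁻¹ * rkC M a Θ ((j : ℕ) + 2) - cC a * rkC M a Θ 1) / rkC M a Θ 1

/-- The matrix `ℬ_l(a,Θ)`: the matrix `ℬ(a,Θ)` with its `l`-th column replaced by `-b`. -/
def BlMat (M : ℕ) (a : ℝ) (Θ : Fin (M - 1) → ℝ) (l : ℕ) :
    Matrix (Fin (M - 1)) (Fin (M - 1)) ℂ :=
  Matrix.of fun i j : Fin (M - 1) =>
    if (j : ℕ) + 1 = l then -bvec M a Θ i else Bmat M a Θ i j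

/-!
Write `σ = sinh (π A) = (r⁻¹ - r) / 2`, so that `c = σ + r` and `r⁻¹ = 2σ + r`. Multiplying each
column `m ≠ l` of `ℬ_l` by `r_{m+1}` turns it into `(diag (r_{i+1}) + 𝟙 yᵀ) C`, where `C` is
`σ L + r 𝟙𝟙ᵀ` with its `l`-th column replaced by `-r⁻¹ 𝟙`, `L` is unit lower triangular with `2`
below the diagonal, and `y` is an explicit alternating vector with `yᵀ C = (-r, …, c, …, -r)`.
The matrix determinant lemma evaluates the first factor; adding multiples of the constant column
of `C` to the others reduces `det C` to Cramer's rule for `L`, as `L ((-1)^i)_i = 𝟙`. The signs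
of the closed formula are the signs of `y`.
-/

open Matrix

namespace Matrix

variable {m R : Type*} [Fintype m] [DecidableEq m] [CommRing R]

theorem det_updateCol_mulVec (A : Matrix m m R) (x : m → R) (j : m) :
    (A.updateCol j (A *ᵥ x)).det = A.det * x j := by
  rw [← cramer_apply, cramer_eq_adjugate_mulVec, mulVec_mulVec, adjugate_mul, smul_mulVec,
    one_mulVec, Pi.smul_apply, smul_eq_mul]

theorem det_add_replicateCol_mulVec_mul_replicateRow {ι : Type*} [Unique ι] (A : Matrix m m R)
    (u v : m → R) :
    (A + replicateCol ι (A *ᵥ u) * replicateRow ι v).det = A.det * (1 + v ⬝ᵥ u) := by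
  have h : A + replicateCol ι (A *ᵥ u) * replicateRow ι v =
      A * (1 + replicateCol ι u * replicateRow ι v) := by
    rw [replicateCol_mulVec, Matrix.mul_add, Matrix.mul_one, Matrix.mul_assoc]
  rw [h, det_mul, det_one_add_replicateCol_mul_replicateRow]

theorem det_add_replicateCol_col_mul_replicateRow {ι : Type*} [Unique ι] (A : Matrix m m R)
    (j : m) {v : m → R} (hv : v j = 0) :
    (A + replicateCol ι (A.col j) * replicateRow ι v).det = A.det := by
  rw [← mulVec_single_one, det_add_replicateCol_mulVec_mul_replicateRow, dotProduct_single, hv,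
    mul_one, add_zero, mul_one]

theorem det_diagonal_add_replicateCol_one_mul_replicateRow {K : Type*} [Field K] {ι : Type*}
    [Unique ι] {d : m → K} (hd : ∀ i, d i ≠ 0) (y : m → K) :
    (diagonal d + replicateCol ι (1 : m → K) * replicateRow ι y).det =
      (∏ i, d i) * (1 + ∑ i, y i / d i) := by
  have h1 : (1 : m → K) = diagonal d *ᵥ d⁻¹ := by
    ext i
    simp [mulVec_diagonal, hd i]
  rw [h1, det_add_replicateCol_mulVec_mul_replicateRow, det_diagonal]
  simp [dotProduct, div_eq_mul_inv]

end Matrix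

section TwoLower

variable {R : Type*} [CommRing R]

def twoLower (n : ℕ) : Matrix (Fin n) (Fin n) R :=
  of fun i j => if j < i then 2 else if i = j then 1 else 0

theorem det_twoLower (n : ℕ) : (twoLower n : Matrix (Fin n) (Fin n) R).det = 1 := by
  rw [det_of_isLowerTriangular _ fun i j (hij : i < j) => ?_]
  · simp [twoLower]
  · simp [twoLower, hij.not_gt, hij.ne]

theorem twoLower_mulVec_apply {n : ℕ} (f : ℕ → R) (i : Fin n) :
    (twoLower n *ᵥ fun j => f j) i = f i + 2 * ∑ k ∈ range i, f k := by
  set w : ℕ → R := fun k => if k < i then 2 else if (i : ℕ) = k then 1 else 0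
  have hw : (twoLower n *ᵥ fun j => f j) i = ∑ k ∈ range n, w k * f k := by
    simp only [mulVec, dotProduct, twoLower, of_apply, Fin.lt_def, Fin.ext_iff]
    exact Fin.sum_univ_eq_sum_range (fun k => w k * f k) n
  rw [hw, ← sum_range_add_sum_Ico _ i.is_lt.le, sum_eq_sum_Ico_succ_bot i.is_lt, mul_sum,
    sum_congr rfl fun k hk => show w k * f k = 2 * f k by simp [w, mem_range.mp hk],
    sum_congr rfl fun k hk => show w k * f k = 0 by
      have := mem_Ico.mp hk; simp [w, show ¬ k < i by omega, show (i : ℕ) ≠ k by omega]]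
  simp [w, add_comm]

theorem vecMul_twoLower_apply {n : ℕ} (f : ℕ → R) (j : Fin n) :
    ((fun i : Fin n => f i) ᵥ* twoLower n) j = f j + 2 * ∑ k ∈ Ico (j + 1 : ℕ) n, f k := by
  set w : ℕ → R := fun k => if (j : ℕ) < k then 2 else if k = j then 1 else 0
  have hw : ((fun i : Fin n => f i) ᵥ* twoLower n) j = ∑ k ∈ range n, f k * w k := by
    simp only [vecMul, dotProduct, twoLower, of_apply, Fin.lt_def, Fin.ext_iff]
    exact Fin.sum_univ_eq_sum_range (fun k => f k * w k) n
  rw [hw, ← sum_range_add_sum_Ico _ j.is_lt.le, sum_eq_sum_Ico_succ_bot j.is_lt, mul_sum,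
    sum_congr rfl fun k hk => show f k * w k = 0 by
      have := mem_range.mp hk; simp [w, show ¬ (j : ℕ) < k by omega, show k ≠ j by omega],
    sum_congr rfl fun k hk => show f k * w k = 2 * f k by
      have := mem_Ico.mp hk; simp [w, show (j : ℕ) < k by omega, mul_comm]]
  simp [w]

theorem twoLower_mulVec_neg_one_pow (n : ℕ) :
    (twoLower n : Matrix (Fin n) (Fin n) R) *ᵥ (fun j => (-1) ^ (j : ℕ)) = 1 := by
  ext i
  rw [twoLower_mulVec_apply (fun k => (-1 : R) ^ k), mul_sum,
    sum_congr rfl fun k _ => show (2 : R) * (-1) ^ k = (-1) ^ k - (-1) ^ (k + 1) by ring,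
    sum_range_sub']
  simp

end TwoLower

section Model

variable {K : Type*} [Field K] (r : K)

/-- The tail sums `∑ k ≤ i < n, weight r n p i`. The two branches are forced by `weightTail n = 0`
and `weightTail k + weightTail (k + 1) = -r ^ 2` for `k ≠ p`, which is what makes
`weight ᵥ* coreMat` constant off column `p`. -/
def weightTail (r : K) (n p k : ℕ) : K :=
  if k ≤ p then -((-1) ^ k + r ^ 2) / 2 else ((-1) ^ (n + k) - 1) * r ^ 2 / 2

def weight (r : K) (n p k : ℕ) : K := weightTail r n p k - weightTail r n p (k + 1)

theorem weightTail_add_weightTail_succ [NeZero (2 : K)] {n p k : ℕ} (hkp : k ≠ p) :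
    weightTail r n p k + weightTail r n p (k + 1) = -r ^ 2 := by
  rcases Nat.lt_or_gt_of_ne hkp with h | h
  · rw [weightTail, weightTail, if_pos h.le, if_pos (show k + 1 ≤ p from h)]
    field_simp
    ring
  · rw [weightTail, weightTail, if_neg h.not_ge, if_neg (by omega)]
    field_simp
    ring

theorem weightTail_top {n p : ℕ} (hp : p < n) : weightTail r n p n = 0 := by
  rw [weightTail, if_neg hp.not_ge, ← two_mul, (even_two_mul n).neg_one_pow]
  ring

theorem sum_Ico_weight {m n p : ℕ} (hmn : m ≤ n) (hp : p < n) :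
    ∑ k ∈ Ico m n, weight r n p k = weightTail r n p m := by
  simp only [sum_Ico_eq_sub _ hmn, weight, sum_range_sub', weightTail_top r hp]
  ring

theorem sum_weight {n p : ℕ} (hp : p < n) :
    ∑ k ∈ range n, weight r n p k = -(1 + r ^ 2) / 2 := by
  rw [range_eq_Ico, sum_Ico_weight r n.zero_le hp]
  simp [weightTail]

theorem weight_of_lt [NeZero (2 : K)] {n p k : ℕ} (h : k < p) : weight r n p k = -(-1) ^ k := by
  rw [weight, weightTail, weightTail, if_pos h.le, if_pos (show k + 1 ≤ p from h)]
  field_simp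
  ring

theorem weight_self [NeZero (2 : K)] (n p : ℕ) :
    weight r n p p = ((-1) ^ (n + p) * r ^ 2 - (-1) ^ p) / 2 := by
  rw [weight, weightTail, weightTail, if_pos le_rfl, if_neg (by omega)]
  field_simp
  ring

theorem weight_of_gt [NeZero (2 : K)] {n p k : ℕ} (h : p < k) :
    weight r n p k = (-1) ^ (n + k) * r ^ 2 := by
  rw [weight, weightTail, weightTail, if_neg h.not_ge, if_neg (by omega)]
  field_simp
  ring

def coreMat (r : K) {n : ℕ} (p : Fin n) : Matrix (Fin n) (Fin n) K :=
  of fun i j => if j = p then -r⁻¹ else (r⁻¹ - r) / 2 * twoLower n i j + r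

theorem vecMul_coreMat [NeZero (2 : K)] (hr : r ≠ 0) {n : ℕ} (p : Fin n) :
    (fun i : Fin n => weight r n p i) ᵥ* coreMat r p =
      fun j => if j = p then (r + r⁻¹) / 2 else -r := by
  have hsum : ∑ i : Fin n, weight r n p i = -(1 + r ^ 2) / 2 := by
    rw [Fin.sum_univ_eq_sum_range (weight r n p), sum_weight r p.is_lt]
  ext j
  by_cases hj : j = p
  · simp only [vecMul, dotProduct, coreMat, of_apply, hj, if_true, ← sum_mul, hsum]
    field_simp
    ring
  · have hsplit : ((fun i : Fin n => weight r n p i) ᵥ* coreMat r p) j =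
        (r⁻¹ - r) / 2 * ((fun i : Fin n => weight r n p i) ᵥ* twoLower n) j +
          r * ∑ i : Fin n, weight r n p i := by
      simp only [vecMul, dotProduct, coreMat, of_apply, hj, if_false, mul_add, sum_add_distrib,
        mul_sum]
      congr 1 <;> exact sum_congr rfl fun i _ => by ring
    rw [hsplit, vecMul_twoLower_apply, sum_Ico_weight r j.is_lt p.is_lt, hsum, if_neg hj, weight,
      Nat.succ_eq_add_one, show ∀ x y : K, x - y + 2 * y = x + y from fun x y => by ring,
      weightTail_add_weightTail_succ r (Fin.val_ne_of_ne hj)]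
    field_simp
    ring

theorem det_coreMat (hr : r ≠ 0) {n : ℕ} (p : Fin n) :
    (coreMat r p).det = -r⁻¹ * (-1) ^ (p : ℕ) * ((r⁻¹ - r) / 2) ^ (n - 1) := by
  set A := (twoLower n).updateCol p (fun _ => -r⁻¹) *
    diagonal (Function.update (fun _ => (r⁻¹ - r) / 2) p 1)
  have hA : coreMat r p = A + replicateCol Unit (A.col p) *
      replicateRow Unit (Function.update (fun _ => -r ^ 2) p 0) := by
    ext i j
    by_cases hj : j = p <;> simp [A, coreMat, hj, ← vecMulVec_eq, vecMulVec_apply, mul_diagonal]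
    field_simp
  have hcol : (fun _ => -r⁻¹) = twoLower n *ᵥ (-r⁻¹ • fun j : Fin n => (-1 : K) ^ (j : ℕ)) := by
    rw [mulVec_smul, twoLower_mulVec_neg_one_pow]
    ext
    simp
  rw [hA, det_add_replicateCol_col_mul_replicateRow _ _ (by simp), det_mul, hcol,
    det_updateCol_mulVec, det_twoLower, det_diagonal, prod_update_of_mem (mem_univ p)]
  simp [prod_const, card_sdiff, div_pow]

/-- `ℬ_l` in the variables `r` and `t k = r_{k+1}`, normalised by `r_1 = 1`; the column `p`
(counted from `0`) is the replaced one, `p = l - 1`. -/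
def modelMat (r : K) {n : ℕ} (p : Fin n) (t : ℕ → K) : Matrix (Fin n) (Fin n) K :=
  of fun i j =>
    if j = p then (r + r⁻¹) / 2 - r⁻¹ * t (i + 1)
    else if i = j then ((r + r⁻¹) / 2 * t (i + 1) - r) / t (i + 1)
    else if i < j then r * (t (i + 1) - 1) / t (j + 1)
    else (r⁻¹ * t (i + 1) - r) / t (j + 1)

theorem modelMat_mul_diagonal [NeZero (2 : K)] (hr : r ≠ 0) {n : ℕ} (p : Fin n) {t : ℕ → K}
    (ht : ∀ k, t k ≠ 0) :
    modelMat r p t * diagonal (Function.update (fun i : Fin n => t (i + 1)) p 1) =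
      (diagonal (fun i : Fin n => t (i + 1)) +
        replicateCol Unit (1 : Fin n → K) * replicateRow Unit (fun i : Fin n => weight r n p i)) *
        coreMat r p := by
  rw [Matrix.add_mul, Matrix.mul_assoc, ← replicateRow_vecMul, vecMul_coreMat r hr]
  ext i j
  rw [Matrix.add_apply, mul_diagonal, diagonal_mul, ← vecMulVec_eq, vecMulVec_apply]
  simp only [modelMat, coreMat, twoLower, of_apply, Function.update_apply, Pi.one_apply]
  have := ht (i + 1)
  have := ht (j + 1)
  split_ifs <;> subst_vars <;> first | order | (field_simp; ring)

theorem neg_inv_mul_one_add_sum_weight_div [NeZero (2 : K)] (hr : r ≠ 0) {n p : ℕ} (hp : p < n)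
    {t : ℕ → K} (ht : ∀ k, t k ≠ 0) (ht0 : t 0 = 1) :
    -r⁻¹ * (-1) ^ p * (t (p + 1) * (1 + ∑ k ∈ range n, weight r n p k / t (k + 1))) =
      (r⁻¹ - (-1) ^ (n + 1) * r) / 2 +
        ∑ k ∈ range (p + 1), (-1) ^ (p + 1 + k) * (r⁻¹ * t (p + 1) / t k) +
        (-1) ^ (n + 1) * ∑ k ∈ Icc (p + 1) n, (-1) ^ (p + 1 + k) * (r * t (p + 1) / t k) := by
  set S₁ := ∑ k ∈ range p, (-1) ^ k / t (k + 1) with hS₁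
  set S₂ := ∑ k ∈ Ico (p + 1) n, (-1) ^ k / t (k + 1) with hS₂
  have hL : ∑ k ∈ range n, weight r n p k / t (k + 1) =
      -S₁ + weight r n p p / t (p + 1) + (-1) ^ n * r ^ 2 * S₂ := by
    rw [← sum_range_add_sum_Ico _ hp.le, sum_eq_sum_Ico_succ_bot hp,
      sum_congr rfl fun k hk => show weight r n p k / t (k + 1) = -((-1) ^ k / t (k + 1)) by
        rw [weight_of_lt r (mem_range.mp hk)]; ring,
      sum_congr rfl fun k hk => show weight r n p k / t (k + 1) =
          (-1) ^ n * r ^ 2 * ((-1) ^ k / t (k + 1)) by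
        rw [weight_of_gt r (mem_Ico.mp hk).1]; ring,
      sum_neg_distrib, ← mul_sum, ← hS₁, ← hS₂, add_assoc]
  have hR₁ : ∑ k ∈ range (p + 1), (-1) ^ (p + 1 + k) * (r⁻¹ * t (p + 1) / t k) =
      (-1) ^ (p + 1) * r⁻¹ * t (p + 1) * (1 - S₁) := by
    rw [sum_range_succ', ht0,
      sum_congr rfl fun k _ => show (-1) ^ (p + 1 + (k + 1)) * (r⁻¹ * t (p + 1) / t (k + 1)) =
          -((-1) ^ (p + 1) * r⁻¹ * t (p + 1) * ((-1) ^ k / t (k + 1))) by ring,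
      sum_neg_distrib, ← mul_sum, ← hS₁]
    ring
  have hR₂ : ∑ k ∈ Icc (p + 1) n, (-1) ^ (p + 1 + k) * (r * t (p + 1) / t k) =
      r + (-1) ^ p * r * t (p + 1) * S₂ := by
    rw [← Ico_add_one_right_eq_Icc, ← sum_Ico_add' _ p n 1, sum_eq_sum_Ico_succ_bot hp,
      sum_congr rfl fun k _ => show (-1) ^ (p + 1 + (k + 1)) * (r * t (p + 1) / t (k + 1)) =
          (-1) ^ p * r * t (p + 1) * ((-1) ^ k / t (k + 1)) by ring,
      ← mul_sum, ← hS₂, ← two_mul, (even_two_mul _).neg_one_pow, one_mul,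
      mul_div_cancel_right₀ _ (ht _)]
  rw [hL, hR₁, hR₂, weight_self]
  have ht1 := ht (p + 1)
  rcases neg_one_pow_eq_or K p with h | h <;> simp only [pow_add, pow_one, h] <;> field_simp <;>
    ring

theorem det_modelMat [NeZero (2 : K)] (hr : r ≠ 0) {n : ℕ} (p : Fin n) {t : ℕ → K}
    (ht : ∀ k, t k ≠ 0) (ht0 : t 0 = 1) :
    (modelMat r p t).det = ((r⁻¹ - r) / 2) ^ (n - 1) *
      ((r⁻¹ - (-1) ^ (n + 1) * r) / 2 +
        ∑ k ∈ range ((p : ℕ) + 1), (-1) ^ ((p : ℕ) + 1 + k) * (r⁻¹ * t ((p : ℕ) + 1) / t k) +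
        (-1) ^ (n + 1) *
          ∑ k ∈ Icc ((p : ℕ) + 1) n, (-1) ^ ((p : ℕ) + 1 + k) * (r * t ((p : ℕ) + 1) / t k)) := by
  have h := congrArg det (modelMat_mul_diagonal r hr p ht)
  rw [det_mul, det_mul, det_diagonal, det_diagonal_add_replicateCol_one_mul_replicateRow
    (fun _ => ht _), det_coreMat r hr, prod_update_of_mem (mem_univ p),
    prod_eq_mul_prod_sdiff_singleton_of_mem (mem_univ p),
    Fin.sum_univ_eq_sum_range (fun k => weight r n p k / t (k + 1))] at h
  rw [← neg_inv_mul_one_add_sum_weight_div r hr p.is_lt ht ht0]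
  have hne : ∏ i ∈ univ \ {p}, t (i + 1) ≠ 0 := prod_ne_zero_iff.mpr fun _ _ => ht _
  refine mul_right_cancel₀ hne ?_
  linear_combination h

end Model

theorem rkC_one (M : ℕ) (a : ℝ) (Θ : Fin (M - 1) → ℝ) : rkC M a Θ 1 = 1 := by
  simp [rkC, thN]

theorem BlMat_eq_modelMat (n : ℕ) (a : ℝ) (Θ : Fin (n + 1 - 1) → ℝ) (p : Fin n) :
    BlMat (n + 1) a Θ (p + 1) = modelMat (rC a) p (fun k => rkC (n + 1) a Θ (k + 1)) := by
  ext i j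
  simp only [BlMat, Bmat, bvec, modelMat, cC, of_apply, rkC_one, Fin.ext_iff, Fin.lt_def,
    add_left_inj]
  split_ifs <;> ring

theorem det_BlMat_general (M : ℕ) (l : ℕ) (hl1 : 1 ≤ l) (hl2 : l ≤ M - 1)
    (a : ℝ) (Θ : Fin (M - 1) → ℝ) :
    (BlMat M a Θ l).det =
      Complex.sinh ((π : ℂ) * Afun a) ^ (M - 2) *
        ((Complex.exp ((π : ℂ) * Afun a) - (-1 : ℂ) ^ M * Complex.exp (-((π : ℂ) * Afun a))) / 2 +
          (∑ k ∈ Finset.range l,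
            (-1 : ℂ) ^ (l + k) * Complex.exp (Afun a * ((thN M Θ k - thN M Θ l + π : ℝ) : ℂ))) +
          (-1 : ℂ) ^ M * ∑ k ∈ Finset.Icc l (M - 1),
            (-1 : ℂ) ^ (l + k) * Complex.exp (Afun a * ((thN M Θ k - thN M Θ l - π : ℝ) : ℂ))) := by
  obtain ⟨n, rfl⟩ : ∃ n, M = n + 1 := ⟨M - 1, by omega⟩
  obtain ⟨p, rfl⟩ : ∃ p : Fin n, l = p + 1 := ⟨⟨l - 1, by omega⟩, by simp; omega⟩
  set r := rC a
  set t : ℕ → ℂ := fun k => rkC (n + 1) a Θ (k + 1)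
  have hexp : Complex.exp ((π : ℂ) * Afun a) = r⁻¹ := by
    simp [r, rC, ← Complex.exp_neg, mul_comm]
  have hexp_neg : Complex.exp (-((π : ℂ) * Afun a)) = r := by
    simp [r, rC, mul_comm]
  have hsinh : Complex.sinh ((π : ℂ) * Afun a) = (r⁻¹ - r) / 2 := by
    rw [Complex.sinh, hexp, hexp_neg]
  have hplus : ∀ k, Complex.exp (Afun a * ((thN (n + 1) Θ k - thN (n + 1) Θ (p + 1) + π : ℝ) : ℂ))
      = r⁻¹ * t (p + 1) / t k := fun k => by
    simp only [t, r, rkC, rC, add_tsub_cancel_right, ← Complex.exp_neg, ← Complex.exp_add,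
      ← Complex.exp_sub]
    congr 1
    push_cast
    ring
  have hminus : ∀ k, Complex.exp (Afun a * ((thN (n + 1) Θ k - thN (n + 1) Θ (p + 1) - π : ℝ) : ℂ))
      = r * t (p + 1) / t k := fun k => by
    simp only [t, r, rkC, rC, add_tsub_cancel_right, ← Complex.exp_add, ← Complex.exp_sub]
    congr 1
    push_cast
    ring
  rw [BlMat_eq_modelMat, det_modelMat r (Complex.exp_ne_zero _) p (t := t)
    (fun _ => Complex.exp_ne_zero _) (rkC_one _ a Θ), hsinh, hexp, hexp_neg,
    show n + 1 - 2 = n - 1 by omega, add_tsub_cancel_right]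
  simp only [hplus, hminus]

theorem det_BlMat (M : ℕ) (hM : 2 ≤ M) (l : ℕ) (hl1 : 1 ≤ l) (hl2 : l ≤ M - 1)
    (a : ℝ) (ha : 0 < a) (Θ : Fin (M - 1) → ℝ) :
    (BlMat M a Θ l).det =
      Complex.sinh ((π : ℂ) * Afun a) ^ (M - 2) *
        ((Complex.exp ((π : ℂ) * Afun a) - (-1 : ℂ) ^ M * Complex.exp (-((π : ℂ) * Afun a))) / 2 +
          (∑ k ∈ Finset.range l,
            (-1 : ℂ) ^ (l + k) * Complex.exp (Afun a * ((thN M Θ k - thN M Θ l + π : ℝ) : ℂ))) +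
          (-1 : ℂ) ^ M * ∑ k ∈ Finset.Icc l (M - 1),
            (-1 : ℂ) ^ (l + k) * Complex.exp (Afun a * ((thN M Θ k - thN M Θ l - π : ℝ) : ℂ))) :=
  det_BlMat_general M l hl1 hl2 a Θ

end
end

section
/- Let M ≥ 1 be an integer and r, r_1, …, r_M ∈ ℂ \ {0}. Let 𝒜 be the M×M complex matrix (indexed by 1 ≤ k,m ≤ M) with 𝒜_{kk} = (r + r^{-1})/2, 𝒜_{km} = r · r_k/r_m for k < m, and 𝒜_{km} = r^{-1} · r_k/r_m for k > m. Then det 𝒜 = ((r - r^{-1})/2)^{2p} · ((r + r^{-1})/2)^q, where M = 2p + q with p a nonnegative integer and q ∈ {0,1}. -/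
/-!
Conjugating by `diagonal rv` removes the factors `rv k / rv m`, leaving the `M × M` Toeplitz
matrix `B_M` with `d = (r + r⁻¹)/2` on the diagonal, `d + s = r` above and `d - s = r⁻¹` below
it, where `s = (r - r⁻¹)/2`. Subtracting row 1 from row 0 and then column 0 from column 1 turns
row 0 into `(s, 0, …, 0)` and the rest of column 1 into `(s, 0, …, 0)`, so two cofactor
expansions give `det B_{n+2} = s² det B_n`; with `det B_0 = 1` and `det B_1 = d` this is the claim.
-/

namespace Matrix

variable {R : Type*} [CommRing R]

theorem det_succ_of_row_zero_eq_zero {n : ℕ} (A : Matrix (Fin (n + 1)) (Fin (n + 1)) R)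
    (hA : ∀ j ≠ 0, A 0 j = 0) : A.det = A 0 0 * (A.submatrix Fin.succ Fin.succ).det := by
  rw [det_succ_row_zero, Fin.sum_univ_succ, Finset.sum_eq_zero fun j _ => by
    rw [hA j.succ (Fin.succ_ne_zero j), mul_zero, zero_mul]]
  simp

theorem det_succ_of_col_zero_eq_zero {n : ℕ} (A : Matrix (Fin (n + 1)) (Fin (n + 1)) R)
    (hA : ∀ i ≠ 0, A i 0 = 0) : A.det = A 0 0 * (A.submatrix Fin.succ Fin.succ).det := by
  rw [← det_transpose, det_succ_of_row_zero_eq_zero _ hA, ← transpose_submatrix, det_transpose]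
  rfl

def signToeplitz (d s : R) (n : ℕ) : Matrix (Fin n) (Fin n) R :=
  of fun i j => if (i : ℕ) = j then d else if (i : ℕ) < j then d + s else d - s

theorem det_signToeplitz_add_two (d s : R) (n : ℕ) :
    (signToeplitz d s (n + 2)).det = s ^ 2 * (signToeplitz d s n).det := by
  set B := signToeplitz d s (n + 2)
  set B₁ := updateRow B 0 (B 0 + (-1 : R) • B 1)
  set B₂ := updateCol B₁ 1 fun k => B₁ k 1 + (-1 : R) • B₁ k 0
  have hdet : B.det = B₂.det := by
    rw [det_updateCol_add_smul_self _ Fin.zero_ne_one.symm,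
      det_updateRow_add_smul_self _ Fin.zero_ne_one]
  have hB₂ : ∀ i j, B₂ i j =
      if (i : ℕ) = 0 then (if (j : ℕ) = 0 then s else 0)
      else if (j : ℕ) = 1 then (if (i : ℕ) = 1 then s else 0)
      else B i j := by
    intro i j
    simp only [B₂, B₁, B, signToeplitz, updateCol_apply, updateRow_apply, Fin.ext_iff,
      Pi.add_apply, Pi.smul_apply, of_apply, Fin.val_zero, Fin.val_one, smul_eq_mul]
    split_ifs <;> grind
  have hrow : ∀ j ≠ 0, B₂ 0 j = 0 := fun j hj => by simp [hB₂, hj]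
  have hcol : ∀ i ≠ 0, B₂.submatrix Fin.succ Fin.succ i 0 = 0 := fun i hi => by
    simp [hB₂, hi]
  have hminor :
      B₂.submatrix (Fin.succ ∘ Fin.succ) (Fin.succ ∘ Fin.succ) = signToeplitz d s n := by
    ext i j
    simp [hB₂, B, signToeplitz]
  rw [hdet, det_succ_of_row_zero_eq_zero _ hrow, det_succ_of_col_zero_eq_zero _ hcol,
    submatrix_submatrix, hminor]
  simp [hB₂]
  ring

theorem det_signToeplitz (d s : R) (p q : ℕ) (hq : q ≤ 1) :
    (signToeplitz d s (2 * p + q)).det = s ^ (2 * p) * d ^ q := by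
  induction p with
  | zero =>
    interval_cases q
    · simp
    · simp [signToeplitz]
  | succ p ih =>
    rw [show 2 * (p + 1) + q = 2 * p + q + 2 by ring, det_signToeplitz_add_two, ih]
    ring

theorem det_of_mul_div {n K : Type*} [Fintype n] [DecidableEq n] [Field K] (v : n → K)
    (hv : ∀ i, v i ≠ 0) (B : Matrix n n K) : (of fun i j => v i * B i j / v j).det = B.det := by
  have hconj : of (fun i j => v i * B i j / v j) = diagonal v * B * diagonal v⁻¹ := by
    ext i j
    simp [div_eq_mul_inv]
  rw [hconj, det_conj_of_mul_eq_one] <;> simp [diagonal_mul_diagonal, hv]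

end Matrix

theorem det_abstract_A_general (M : ℕ) (r : ℂ)
    (rv : Fin M → ℂ) (hrv : ∀ k, rv k ≠ 0)
    (p q : ℕ) (hq : q = 0 ∨ q = 1) (hMpq : M = 2 * p + q) :
    (Matrix.of fun k m : Fin M =>
        if (k : ℕ) = (m : ℕ) then (r + r⁻¹) / 2
        else if (k : ℕ) < (m : ℕ) then r * rv k / rv m
        else r⁻¹ * rv k / rv m).det =
      ((r - r⁻¹) / 2) ^ (2 * p) * ((r + r⁻¹) / 2) ^ q := by
  subst hMpq
  rw [← Matrix.det_signToeplitz _ _ p q (by omega), eq_comm, ← Matrix.det_of_mul_div rv hrv]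
  congr 1
  ext k m
  simp only [Matrix.signToeplitz, Matrix.of_apply]
  split_ifs with hkm
  · rw [Fin.val_inj.mp hkm, mul_div_cancel_left₀ _ (hrv m)]
  all_goals ring

theorem det_abstract_A (M : ℕ) (hM : 1 ≤ M) (r : ℂ) (hr : r ≠ 0)
    (rv : Fin M → ℂ) (hrv : ∀ k, rv k ≠ 0)
    (p q : ℕ) (hq : q = 0 ∨ q = 1) (hMpq : M = 2 * p + q) :
    (Matrix.of fun k m : Fin M =>
        if (k : ℕ) = (m : ℕ) then (r + r⁻¹) / 2
        else if (k : ℕ) < (m : ℕ) then r * rv k / rv m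
        else r⁻¹ * rv k / rv m).det =
      ((r - r⁻¹) / 2) ^ (2 * p) * ((r + r⁻¹) / 2) ^ q :=
  det_abstract_A_general M r rv hrv p q hq hMpq
end

section
/- Let M ≥ 2 be an integer and Θ = (θ_1,…,θ_{M-1}) ∈ ℝ^{M-1}. Then lim_{a→∞} [ -a² (d/da) 𝒦(a,Θ) ] = ((-1)^M - 1)π - 2(-1)^M Σ_{k=1}^{M-1} (-1)^k (θ_k - π) e^{-2iθ_k}. -/
open Complex Real Finset Filter Topology

noncomputable section

/-- `𝒦(a,Θ)`, for angles `θ : ℕ → ℝ` (with `θ 0 = 0` understood). -/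
def KfunN (M : ℕ) (θ : ℕ → ℝ) (a : ℝ) : ℂ :=
  (Complex.exp ((π : ℂ) * Afun a) + (-1 : ℂ) ^ M * Complex.exp (-((π : ℂ) * Afun a))) / 2 +
    (-1 : ℂ) ^ M * ∑ k ∈ Finset.Icc 1 (M - 1),
      (-1 : ℂ) ^ k * Complex.exp (Afun a * ((θ k - π : ℝ) : ℂ))

/-! Writing `𝒦(a,Θ) = K(A(a))` with `K` entire, the chain rule gives
`-a² d𝒦/da = -a² A'(a) K'(A(a))`. Since `A'(a) = 2/(a+i)²` and `A(a) → -2i`, this tends to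
`-2 K'(-2i)`, which is the stated value because `e^{±2πi} = 1`. -/

lemma ofReal_add_I_ne_zero (a : ℝ) : (a : ℂ) + I ≠ 0 := fun h => by
  simpa using congrArg Complex.im h

lemma hasDerivAt_Afun (a : ℝ) : HasDerivAt Afun (2 / ((a : ℂ) + I) ^ 2) a := by
  have hx : HasDerivAt (fun x : ℝ => (x : ℂ)) 1 a := ofRealCLM.hasDerivAt
  refine (((hx.const_mul (-2 : ℂ)).mul_const I).div (hx.add_const I)
    (ofReal_add_I_ne_zero a)).congr_deriv ?_
  congr 1
  linear_combination (-2 : ℂ) * I_sq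

lemma tendsto_ofReal_div_ofReal_add_I :
    Tendsto (fun a : ℝ => (a : ℂ) / ((a : ℂ) + I)) atTop (𝓝 1) := by
  have h : Tendsto (fun a : ℝ => 1 + I * ((a⁻¹ : ℝ) : ℂ)) atTop (𝓝 1) := by
    simpa using ((continuous_ofReal.tendsto 0).comp tendsto_inv_atTop_zero).const_mul I
      |>.const_add 1
  refine (inv_one (G := ℂ) ▸ h.inv₀ one_ne_zero).congr' ?_
  filter_upwards [eventually_gt_atTop 0] with a ha
  have : (a : ℂ) ≠ 0 := ofReal_ne_zero.mpr ha.ne'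
  rw [ofReal_inv, inv_eq_iff_eq_inv, inv_div]
  field_simp

lemma tendsto_Afun : Tendsto Afun atTop (𝓝 (-2 * I)) := by
  convert tendsto_ofReal_div_ofReal_add_I.const_mul (-2 * I) using 2 with a
  · simp only [Afun]; ring
  · ring

lemma tendsto_neg_sq_mul_deriv_Afun :
    Tendsto (fun a : ℝ => -(a : ℂ) ^ 2 * (2 / ((a : ℂ) + I) ^ 2)) atTop (𝓝 (-2)) := by
  convert (tendsto_ofReal_div_ofReal_add_I.pow 2).const_mul (-2 : ℂ) using 2 with a
  · rw [div_pow]; ring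
  · ring

theorem tendsto_neg_sq_mul_deriv_comp_Afun {g g' : ℂ → ℂ}
    (hg : ∀ᶠ z in 𝓝 (-2 * I), HasDerivAt g (g' z) z) (hg' : ContinuousAt g' (-2 * I)) :
    Tendsto (fun a : ℝ => -(a : ℂ) ^ 2 * deriv (fun x : ℝ => g (Afun x)) a) atTop
      (𝓝 (-2 * g' (-2 * I))) := by
  refine (tendsto_neg_sq_mul_deriv_Afun.mul (hg'.tendsto.comp tendsto_Afun)).congr' ?_
  filter_upwards [tendsto_Afun.eventually hg] with a ha
  have hd : HasDerivAt (fun x : ℝ => g (Afun x)) (g' (Afun a) * (2 / ((a : ℂ) + I) ^ 2)) a :=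
    ha.comp a (hasDerivAt_Afun a)
  rw [hd.deriv, Function.comp_apply]
  ring

/-- `KfunN M θ a` is definitionally `KfunA M θ (Afun a)`. -/
def KfunA (M : ℕ) (θ : ℕ → ℝ) (z : ℂ) : ℂ :=
  (exp ((π : ℂ) * z) + (-1 : ℂ) ^ M * exp (-((π : ℂ) * z))) / 2 +
    (-1 : ℂ) ^ M * ∑ k ∈ Icc 1 (M - 1), (-1 : ℂ) ^ k * exp (z * ((θ k - π : ℝ) : ℂ))

def derivKfunA (M : ℕ) (θ : ℕ → ℝ) (z : ℂ) : ℂ :=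
  (π : ℂ) * (exp ((π : ℂ) * z) - (-1 : ℂ) ^ M * exp (-((π : ℂ) * z))) / 2 +
    (-1 : ℂ) ^ M * ∑ k ∈ Icc 1 (M - 1),
      (-1 : ℂ) ^ k * ((θ k - π : ℝ) : ℂ) * exp (z * ((θ k - π : ℝ) : ℂ))

lemma hasDerivAt_KfunA (M : ℕ) (θ : ℕ → ℝ) (z : ℂ) :
    HasDerivAt (KfunA M θ) (derivKfunA M θ z) z := by
  have hπ : HasDerivAt (fun w : ℂ => (π : ℂ) * w) π z := by
    simpa using (hasDerivAt_id z).const_mul (π : ℂ)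
  have hsum := HasDerivAt.fun_sum (u := Icc 1 (M - 1)) fun k _ =>
    (((hasDerivAt_id z).mul_const ((θ k - π : ℝ) : ℂ)).cexp).const_mul ((-1 : ℂ) ^ k)
  refine (((hπ.cexp.add (hπ.neg.cexp.const_mul ((-1 : ℂ) ^ M))).div_const 2).add
    (hsum.const_mul ((-1 : ℂ) ^ M))).congr_deriv ?_
  simp only [derivKfunA, Pi.neg_apply, id, one_mul, mul_sum]
  congr 1
  · ring
  · exact sum_congr rfl fun k _ => by ring

lemma continuous_derivKfunA (M : ℕ) (θ : ℕ → ℝ) : Continuous (derivKfunA M θ) := by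
  unfold derivKfunA
  fun_prop

lemma neg_two_mul_derivKfunA_neg_two_mul_I (M : ℕ) (θ : ℕ → ℝ) :
    -2 * derivKfunA M θ (-2 * I) = ((-1 : ℂ) ^ M - 1) * (π : ℂ) -
      2 * (-1 : ℂ) ^ M * ∑ k ∈ Icc 1 (M - 1),
        (-1 : ℂ) ^ k * ((θ k - π : ℝ) : ℂ) * exp (-2 * I * (θ k : ℂ)) := by
  have hplus : exp (-((π : ℂ) * (-2 * I))) = 1 := by
    rw [show -((π : ℂ) * (-2 * I)) = 2 * π * I by ring, exp_two_pi_mul_I]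
  have hminus : exp ((π : ℂ) * (-2 * I)) = 1 := by
    rw [show (π : ℂ) * (-2 * I) = -(2 * π * I) by ring, Complex.exp_neg, exp_two_pi_mul_I,
      inv_one]
  have hshift (t : ℝ) : exp (-2 * I * ((t - π : ℝ) : ℂ)) = exp (-2 * I * (t : ℂ)) := by
    rw [show -2 * I * ((t - π : ℝ) : ℂ) = -2 * I * t + 2 * π * I by push_cast; ring,
      Complex.exp_add, exp_two_pi_mul_I, mul_one]
  simp only [derivKfunA, hplus, hminus, hshift]
  ring

theorem limit_deriv_K_general (M : ℕ) (Θ : Fin (M - 1) → ℝ) :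
    Tendsto (fun a : ℝ => -(a : ℂ) ^ 2 * deriv (fun x : ℝ => KfunN M (thN M Θ) x) a)
      atTop
      (𝓝 (((-1 : ℂ) ^ M - 1) * (π : ℂ) -
        2 * (-1 : ℂ) ^ M * ∑ k ∈ Finset.Icc 1 (M - 1),
          (-1 : ℂ) ^ k * ((thN M Θ k - π : ℝ) : ℂ) *
            Complex.exp (-2 * Complex.I * (thN M Θ k : ℂ)))) := by
  rw [← neg_two_mul_derivKfunA_neg_two_mul_I]
  exact tendsto_neg_sq_mul_deriv_comp_Afun (g := KfunA M (thN M Θ))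
    (.of_forall (hasDerivAt_KfunA M _)) (continuous_derivKfunA M _).continuousAt

theorem limit_deriv_K (M : ℕ) (hM : 2 ≤ M) (Θ : Fin (M - 1) → ℝ) :
    Tendsto (fun a : ℝ => -(a : ℂ) ^ 2 * deriv (fun x : ℝ => KfunN M (thN M Θ) x) a)
      atTop
      (𝓝 (((-1 : ℂ) ^ M - 1) * (π : ℂ) -
        2 * (-1 : ℂ) ^ M * ∑ k ∈ Finset.Icc 1 (M - 1),
          (-1 : ℂ) ^ k * ((thN M Θ k - π : ℝ) : ℂ) *
            Complex.exp (-2 * Complex.I * (thN M Θ k : ℂ)))) :=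
  limit_deriv_K_general M Θ

end
end

section
/- Let M ≥ 3 be an odd integer, a > 0 and Θ = (θ_1,…,θ_{M-1}) ∈ ℝ^{M-1}. Then cosh(πA) · 𝒦(a,Θ) + Σ_{l=1}^{M-1} 𝓗_l(a,Θ) e^{A(θ_l - π)} = cosh(πA) sinh(πA). -/
open Complex Real Finset

noncomputable section

/-- `𝓗_l(a,Θ)`, for angles `θ : ℕ → ℝ` (with `θ 0 = 0` understood). -/
def HfunN (M : ℕ) (θ : ℕ → ℝ) (l : ℕ) (a : ℝ) : ℂ :=
  (Complex.exp ((π : ℂ) * Afun a) - (-1 : ℂ) ^ M * Complex.exp (-((π : ℂ) * Afun a))) / 2 +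
    (∑ k ∈ Finset.range l,
      (-1 : ℂ) ^ (l + k) * Complex.exp (Afun a * ((θ k - θ l + π : ℝ) : ℂ))) +
    (-1 : ℂ) ^ M * ∑ k ∈ Finset.Icc l (M - 1),
      (-1 : ℂ) ^ (l + k) * Complex.exp (Afun a * ((θ k - θ l - π : ℝ) : ℂ))


/-!
With `E = exp (π A)` and `x k = exp (A θ_k)`, multiplying `𝓗_l` by `exp (A (θ_l - π))` removes
`θ_l` from every exponent, so the left-hand side becomes a combination of the `x k` whose only
non-trivial parts are the triangular double sums `∑ l, ∑ k < l, (-1)^(l+k) x k` and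
`∑ l, ∑ k ≥ l, (-1)^(l+k) x k`. For `M` odd the number `M - 1` of angles is even, and then these
two sums are opposite, both being `±` the sum of the `x k` with `k` odd; everything except
`cosh (π A) sinh (π A)` then cancels because `E · exp (-π A) = 1`.
-/

section AlternatingSums

variable (x : ℕ → ℂ)

lemma sum_Icc_one_neg_one_pow (n : ℕ) : ∑ l ∈ Icc 1 n, (-1 : ℂ) ^ l = ((-1) ^ n - 1) / 2 := by
  induction n with
  | zero => simp
  | succ m ih =>
    rw [sum_Icc_succ_top (by omega), ih]
    ring

lemma sum_Icc_sum_Icc_neg_one_pow_mul (n : ℕ) :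
    ∑ l ∈ Icc 1 n, ∑ k ∈ Icc l n, (-1 : ℂ) ^ (l + k) * x k =
      ∑ k ∈ Icc 1 n, (1 - (-1 : ℂ) ^ k) / 2 * x k := by
  rw [sum_comm' (t' := Icc 1 n) (s' := fun k => Icc 1 k) (by intros; simp only [mem_Icc]; omega)]
  refine sum_congr rfl fun k _ => ?_
  have hsq : ((-1 : ℂ) ^ k) ^ 2 = 1 := by rw [← pow_mul, pow_mul']; norm_num
  simp_rw [pow_add, ← sum_mul, sum_Icc_one_neg_one_pow]
  linear_combination x k / 2 * hsq

/-- The two halves together form `(∑ l ∈ Icc 1 n, (-1)^l) * (∑ k ≤ n, (-1)^k x k)`, whose first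
factor vanishes for even `n`. -/
lemma sum_Icc_sum_range_neg_one_pow_mul_of_even {n : ℕ} (hn : Even n) :
    ∑ l ∈ Icc 1 n, ∑ k ∈ range l, (-1 : ℂ) ^ (l + k) * x k =
      -∑ l ∈ Icc 1 n, ∑ k ∈ Icc l n, (-1 : ℂ) ^ (l + k) * x k := by
  have hsquare : ∑ l ∈ Icc 1 n, (∑ k ∈ range l, (-1 : ℂ) ^ (l + k) * x k +
      ∑ k ∈ Icc l n, (-1 : ℂ) ^ (l + k) * x k) = 0 := by
    have hsplit : ∀ l ∈ Icc 1 n, ∑ k ∈ range l, (-1 : ℂ) ^ (l + k) * x k +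
        ∑ k ∈ Icc l n, (-1 : ℂ) ^ (l + k) * x k =
          (-1) ^ l * ∑ k ∈ range (n + 1), (-1 : ℂ) ^ k * x k := by
      intro l hl
      rw [← Ico_add_one_right_eq_Icc, sum_range_add_sum_Ico _ (by simp at hl; omega), mul_sum]
      simp_rw [pow_add, mul_assoc]
    rw [sum_congr rfl hsplit, ← sum_mul, sum_Icc_one_neg_one_pow, hn.neg_one_pow]
    ring
  rw [sum_add_distrib] at hsquare
  exact eq_neg_of_add_eq_zero_left hsquare

end AlternatingSums

lemma exp_Afun_mul_sub_pi (a t : ℝ) :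
    exp (Afun a * ((t - π : ℝ) : ℂ)) = exp (-(π * Afun a)) * exp (Afun a * t) := by
  rw [← Complex.exp_add]
  push_cast
  ring_nf

lemma KfunN_eq (M : ℕ) (θ : ℕ → ℝ) (a : ℝ) :
    KfunN M θ a = (exp (π * Afun a) + (-1) ^ M * exp (-(π * Afun a))) / 2 +
      (-1) ^ M * exp (-(π * Afun a)) *
        ∑ k ∈ Icc 1 (M - 1), (-1 : ℂ) ^ k * exp (Afun a * θ k) := by
  simp only [KfunN, exp_Afun_mul_sub_pi, mul_assoc, mul_sum,
    mul_left_comm _ (exp (-(π * Afun a)))]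

lemma HfunN_mul_exp (M : ℕ) (θ : ℕ → ℝ) (l : ℕ) (a : ℝ) :
    HfunN M θ l a * exp (Afun a * ((θ l - π : ℝ) : ℂ)) =
      (exp (π * Afun a) - (-1) ^ M * exp (-(π * Afun a))) / 2 *
          exp (Afun a * ((θ l - π : ℝ) : ℂ)) +
        ∑ k ∈ range l, (-1 : ℂ) ^ (l + k) * exp (Afun a * θ k) +
        (-1) ^ M * exp (-(π * Afun a)) ^ 2 *
          ∑ k ∈ Icc l (M - 1), (-1 : ℂ) ^ (l + k) * exp (Afun a * θ k) := by
  have hlow : ∀ k, exp (Afun a * ((θ k - θ l + π : ℝ) : ℂ)) *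
      exp (Afun a * ((θ l - π : ℝ) : ℂ)) = exp (Afun a * θ k) := by
    intro k
    rw [← Complex.exp_add]
    push_cast
    ring_nf
  have hhigh : ∀ k, exp (Afun a * ((θ k - θ l - π : ℝ) : ℂ)) *
      exp (Afun a * ((θ l - π : ℝ) : ℂ)) = exp (-(π * Afun a)) ^ 2 * exp (Afun a * θ k) := by
    intro k
    rw [sq, ← Complex.exp_add, ← Complex.exp_add, ← Complex.exp_add]
    push_cast
    ring_nf
  simp only [HfunN, add_mul, sum_mul, mul_assoc, hlow, hhigh, mul_sum,
    mul_left_comm _ (exp (-(π * Afun a)) ^ 2)]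

theorem cosh_mul_KfunN_add_sum_HfunN_mul_exp {M : ℕ} (hM : Odd M) (θ : ℕ → ℝ) (a : ℝ) :
    cosh (π * Afun a) * KfunN M θ a +
        ∑ l ∈ Icc 1 (M - 1), HfunN M θ l a * exp (Afun a * ((θ l - π : ℝ) : ℂ)) =
      cosh (π * Afun a) * sinh (π * Afun a) := by
  have hn : Even (M - 1) := hM.tsub_odd odd_one
  set n := M - 1
  set E := exp (π * Afun a)
  set F := exp (-(π * Afun a))
  set x : ℕ → ℂ := fun k => exp (Afun a * θ k)
  have hEF : E * F = 1 := by rw [← Complex.exp_add, add_neg_cancel, Complex.exp_zero]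
  have hodd : ∑ k ∈ Icc 1 n, (1 - (-1 : ℂ) ^ k) / 2 * x k =
      (∑ k ∈ Icc 1 n, x k - ∑ k ∈ Icc 1 n, (-1) ^ k * x k) / 2 := by
    rw [← sum_sub_distrib, sum_div]
    exact sum_congr rfl fun k _ => by ring
  rw [KfunN_eq, sum_congr rfl fun l _ => HfunN_mul_exp M θ l a, hM.neg_one_pow]
  simp only [exp_Afun_mul_sub_pi, sum_add_distrib, ← mul_sum]
  rw [sum_Icc_sum_range_neg_one_pow_mul_of_even x hn, sum_Icc_sum_Icc_neg_one_pow_mul, hodd,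
    Complex.cosh, Complex.sinh]
  linear_combination (∑ k ∈ Icc 1 n, x k - ∑ k ∈ Icc 1 n, (-1) ^ k * x k) / 2 * hEF

theorem cosh_K_add_sum_H_general (M : ℕ) (hModd : Odd M) (a : ℝ)
    (Θ : Fin (M - 1) → ℝ) :
    Complex.cosh ((π : ℂ) * Afun a) * KfunN M (thN M Θ) a +
        ∑ l ∈ Finset.Icc 1 (M - 1),
          HfunN M (thN M Θ) l a * Complex.exp (Afun a * ((thN M Θ l - π : ℝ) : ℂ)) =
      Complex.cosh ((π : ℂ) * Afun a) * Complex.sinh ((π : ℂ) * Afun a) :=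
  cosh_mul_KfunN_add_sum_HfunN_mul_exp hModd (thN M Θ) a

theorem cosh_K_add_sum_H (M : ℕ) (hM : 3 ≤ M) (hModd : Odd M) (a : ℝ) (ha : 0 < a)
    (Θ : Fin (M - 1) → ℝ) :
    Complex.cosh ((π : ℂ) * Afun a) * KfunN M (thN M Θ) a +
        ∑ l ∈ Finset.Icc 1 (M - 1),
          HfunN M (thN M Θ) l a * Complex.exp (Afun a * ((thN M Θ l - π : ℝ) : ℂ)) =
      Complex.cosh ((π : ℂ) * Afun a) * Complex.sinh ((π : ℂ) * Afun a) :=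
  cosh_K_add_sum_H_general M hModd a Θ

end
end
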